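/- Let Γ ⊆ ℝ^d be a lattice and R ∈ OC(Γ). Then lcm(den_Γ(R), den_Γ(R⁻¹)) divides Σ_Γ(R), Σ_Γ(R) divides gcd(den_Γ(R), den_Γ(R⁻¹))^d, and Σ_Γ(R)² divides lcm(den_Γ(R), den_Γ(R⁻¹))^d. -/

import Mathlib

noncomputable section

abbrev Euc (d : ℕ) : Type := EuclideanSpace ℝ (Fin d)

/-- Γ is a (full-rank) lattice in ℝ^d: the ℤ-span of an ℝ-basis of ℝ^d. -/
def IsLattice {d : ℕ} (Γ : AddSubgroup (Euc d)) : Prop :=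
  ∃ b : Module.Basis (Fin d) ℝ (Euc d),
    Γ = (Submodule.span ℤ (Set.range ⇑b)).toAddSubgroup

/-- Two subgroups are commensurate if their intersection has finite index in both. -/
def Commensurate {d : ℕ} (Γ₁ Γ₂ : AddSubgroup (Euc d)) : Prop :=
  ((Γ₁ ⊓ Γ₂).addSubgroupOf Γ₁).FiniteIndex ∧ ((Γ₁ ⊓ Γ₂).addSubgroupOf Γ₂).FiniteIndex

/-- The image α·R(Γ) of Γ under the similarity transformation αR. -/
def simMap {d : ℕ} (α : ℝ) (R : Euc d ≃ₗᵢ[ℝ] Euc d) (Γ : AddSubgroup (Euc d)) :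
    AddSubgroup (Euc d) :=
  Γ.map (α • R.toLinearEquiv.toLinearMap).toAddMonoidHom

/-- The image R(Γ). -/
def rotMap {d : ℕ} (R : Euc d ≃ₗᵢ[ℝ] Euc d) (Γ : AddSubgroup (Euc d)) :
    AddSubgroup (Euc d) :=
  Γ.map R.toLinearEquiv.toLinearMap.toAddMonoidHom

/-- The set of similarity isometries of Γ. -/
def OSset {d : ℕ} (Γ : AddSubgroup (Euc d)) : Set (Euc d ≃ₗᵢ[ℝ] Euc d) :=
  {R | ∃ α : ℝ, 0 < α ∧ simMap α R Γ ≤ Γ}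

/-- The set of scaling factors of R, Scal_Γ(R) = {α : αRΓ ⊆ Γ}. -/
def Scal {d : ℕ} (Γ : AddSubgroup (Euc d)) (R : Euc d ≃ₗᵢ[ℝ] Euc d) : Set ℝ :=
  {α | simMap α R Γ ≤ Γ}

/-- δ is the denominator of R: the smallest positive element of Scal Γ R. -/
def IsDen {d : ℕ} (Γ : AddSubgroup (Euc d)) (R : Euc d ≃ₗᵢ[ℝ] Euc d) (δ : ℝ) : Prop :=
  0 < δ ∧ δ ∈ Scal Γ R ∧ ∀ β : ℝ, 0 < β → β ∈ Scal Γ R → δ ≤ β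

/-- The set of coincidence isometries of Γ. -/
def OCset {d : ℕ} (Γ : AddSubgroup (Euc d)) : Set (Euc d ≃ₗᵢ[ℝ] Euc d) :=
  {R | Commensurate Γ (rotMap R Γ)}

/-- The coincidence index Σ_Γ(R) = [Γ : Γ ∩ RΓ]. -/
def coinIndex {d : ℕ} (Γ : AddSubgroup (Euc d)) (R : Euc d ≃ₗᵢ[ℝ] Euc d) : ℕ :=
  (rotMap R Γ).relIndex Γ

/-- The coincidence site lattice Γ(R) = Γ ∩ RΓ. -/
def CSL {d : ℕ} (Γ : AddSubgroup (Euc d)) (R : Euc d ≃ₗᵢ[ℝ] Euc d) :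
    AddSubgroup (Euc d) :=
  Γ ⊓ rotMap R Γ

/-- The dual lattice Γ* = {x : ⟨x,y⟩ ∈ ℤ for all y ∈ Γ}. -/
def dualLattice {d : ℕ} (Γ : AddSubgroup (Euc d)) : AddSubgroup (Euc d) where
  carrier := {x | ∀ y ∈ Γ, ∃ n : ℤ, (inner ℝ x y : ℝ) = (n : ℝ)}
  zero_mem' := by
    intro y hy
    exact ⟨0, by simp⟩
  add_mem' := by
    intro a b ha hb y hy
    obtain ⟨n, hn⟩ := ha y hy
    obtain ⟨m, hm⟩ := hb y hy
    exact ⟨n + m, by rw [inner_add_left, hn, hm]; push_cast; ring⟩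
  neg_mem' := by
    intro a ha y hy
    obtain ⟨n, hn⟩ := ha y hy
    exact ⟨-n, by rw [inner_neg_left, hn]; push_cast; ring⟩

/-! Let Λ = Γ ∩ RΓ and Σ = [Γ : Λ]. The denominators give k'Γ ⊆ Λ ⊆ Γ and kRΓ ⊆ Λ ⊆ RΓ; as a
lattice has index n^d over its n-th multiple, Σ divides k'^d, and Λ is a lattice. Since R
preserves covolumes, also [RΓ : Λ] = Σ, so Σ divides k^d, and ΣΓ and ΣRΓ lie in Λ: Σ scales R
and R⁻¹ into Γ, hence is a multiple of both denominators. Finally, for m = lcm(k, k') the chain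
mΓ ⊆ m(Γ + RΓ) ⊆ Λ ⊆ Γ has index [Γ + RΓ : Γ] = [RΓ : Λ] = Σ at the first step and Σ at the last,
so Σ² ∣ m^d. -/

open Module MeasureTheory

namespace AddSubgroup

variable {A : Type*} [AddCommGroup A]

theorem map_nsmul_le_iff {H K : AddSubgroup A} {n : ℕ} :
    H.map (nsmulAddMonoidHom n) ≤ K ↔ ∀ x ∈ H, n • x ∈ K := by
  simp [SetLike.le_def]

theorem map_nsmul_relIndex_le (H K : AddSubgroup A) :
    K.map (nsmulAddMonoidHom (H.relIndex K)) ≤ H :=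
  map_nsmul_le_iff.2 fun _ hx => H.nsmul_relIndex_mem hx

theorem map_nsmul_le_of_dvd {H K : AddSubgroup A} {m n : ℕ} (hmn : m ∣ n)
    (h : H.map (nsmulAddMonoidHom m) ≤ K) : H.map (nsmulAddMonoidHom n) ≤ K := by
  obtain ⟨c, rfl⟩ := hmn
  rw [map_nsmul_le_iff] at h ⊢
  intro x hx
  rw [mul_nsmul]
  exact nsmul_mem (h x hx) c

theorem relIndex_inf_mul_relIndex_inf_dvd [IsAddTorsionFree A] {H K : AddSubgroup A} {n : ℕ}
    (hn : n ≠ 0) (h : (H ⊔ K).map (nsmulAddMonoidHom n) ≤ H ⊓ K) :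
    (H ⊓ K).relIndex H * (H ⊓ K).relIndex K ∣ (H.map (nsmulAddMonoidHom n)).relIndex H := by
  have hle : H.map (nsmulAddMonoidHom n) ≤ (H ⊔ K).map (nsmulAddMonoidHom n) :=
    map_mono le_sup_left
  have hsup : (H.map (nsmulAddMonoidHom n)).relIndex ((H ⊔ K).map (nsmulAddMonoidHom n)) =
      (H ⊓ K).relIndex K := by
    rw [relIndex_map_map_of_injective _ _ (nsmul_right_injective hn), relIndex_sup_left,
      inf_relIndex_right]
  rw [← relIndex_mul_relIndex _ _ _ (hle.trans h) inf_le_left,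
    ← relIndex_mul_relIndex _ _ _ hle h, hsup]
  exact ⟨((H ⊔ K).map (nsmulAddMonoidHom n)).relIndex (H ⊓ K), by ring⟩

end AddSubgroup

theorem IsZLattice.of_relIndex_ne_zero {E : Type*} [NormedAddCommGroup E] [NormedSpace ℝ E]
    {L L' : Submodule ℤ E} [DiscreteTopology L] [IsZLattice ℝ L] [DiscreteTopology L']
    (h : L'.toAddSubgroup.relIndex L.toAddSubgroup ≠ 0) :
    IsZLattice ℝ L' where
  span_top := by
    refine eq_top_iff.2 ((IsZLattice.span_top (K := ℝ) (L := L)).ge.trans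
      (Submodule.span_le.2 fun x hx => ?_))
    set n := L'.toAddSubgroup.relIndex L.toAddSubgroup
    have hnx : n • x ∈ L' := L'.toAddSubgroup.nsmul_relIndex_mem (K := L.toAddSubgroup) hx
    rw [← inv_smul_smul₀ (Nat.cast_ne_zero.2 h : (n : ℝ) ≠ 0) x, Nat.cast_smul_eq_nsmul]
    exact Submodule.smul_mem _ _ (Submodule.subset_span hnx)

section ZLattice

variable {E : Type*} [NormedAddCommGroup E] [InnerProductSpace ℝ E] [FiniteDimensional ℝ E]
  [MeasurableSpace E] [BorelSpace E]

theorem ZLattice.covolume_map_linearIsometryEquiv (L : Submodule ℤ E) [DiscreteTopology L]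
    [IsZLattice ℝ L] (f : E ≃ₗᵢ[ℝ] E) :
    covolume (L.map (f.toLinearEquiv.toLinearMap.restrictScalars ℤ)) = covolume L := by
  have : L.map (f.toLinearEquiv.toLinearMap.restrictScalars ℤ) =
      ZLattice.comap ℝ L f.symm.toContinuousLinearEquiv.toLinearMap :=
    Submodule.map_equiv_eq_comap_symm (f.toLinearEquiv.restrictScalars ℤ) L
  rw [this]
  exact covolume_comap L volume volume f.symm.measurePreserving

theorem ZLattice.relIndex_inf_eq_of_covolume_eq (L₁ L₂ : Submodule ℤ E) [DiscreteTopology L₁]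
    [IsZLattice ℝ L₁] [DiscreteTopology L₂] [IsZLattice ℝ L₂] (hcov : covolume L₁ = covolume L₂)
    (hfin : (L₁ ⊓ L₂).toAddSubgroup.relIndex L₁.toAddSubgroup ≠ 0) :
    (L₁ ⊓ L₂).toAddSubgroup.relIndex L₂.toAddSubgroup =
      (L₁ ⊓ L₂).toAddSubgroup.relIndex L₁.toAddSubgroup := by
  have : DiscreteTopology ↥(L₁ ⊓ L₂) := .of_subset ‹DiscreteTopology L₁› inf_le_left
  have : IsZLattice ℝ (L₁ ⊓ L₂) := .of_relIndex_ne_zero hfin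
  have h₁ := covolume_div_covolume_eq_relIndex' (L₁ ⊓ L₂) L₁ inf_le_left
  have h₂ := covolume_div_covolume_eq_relIndex' (L₁ ⊓ L₂) L₂ inf_le_right
  rw [← hcov] at h₂
  exact_mod_cast h₂.symm.trans h₁

end ZLattice

theorem Module.Basis.span_int_range_map {ι K E F : Type*} [Ring K] [AddCommGroup E] [Module K E]
    [AddCommGroup F] [Module K F] (b : Basis ι K E) (f : E ≃ₗ[K] F) :
    Submodule.span ℤ (Set.range (b.map f)) =
      (Submodule.span ℤ (Set.range b)).map (f.toLinearMap.restrictScalars ℤ) := by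
  rw [Basis.coe_map, Set.range_comp, Submodule.map_span]
  rfl

section Lattice

variable {d : ℕ}

theorem rotMap_span (b : Basis (Fin d) ℝ (Euc d)) (R : Euc d ≃ₗᵢ[ℝ] Euc d) :
    rotMap R (Submodule.span ℤ (Set.range b)).toAddSubgroup =
      (Submodule.span ℤ (Set.range (b.map R.toLinearEquiv))).toAddSubgroup := by
  rw [b.span_int_range_map]
  rfl

theorem isLattice_rotMap {Γ : AddSubgroup (Euc d)} (hΓ : IsLattice Γ) (R : Euc d ≃ₗᵢ[ℝ] Euc d) :
    IsLattice (rotMap R Γ) := by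
  obtain ⟨b, rfl⟩ := hΓ
  exact ⟨b.map R.toLinearEquiv, rotMap_span b R⟩

theorem IsLattice.relIndex_map_nsmul {Γ : AddSubgroup (Euc d)} (hΓ : IsLattice Γ) (n : ℕ) :
    (Γ.map (nsmulAddMonoidHom n)).relIndex Γ = n ^ d := by
  obtain ⟨b, rfl⟩ := hΓ
  have : DiscreteTopology (Submodule.span ℤ (Set.range b)).toAddSubgroup.toIntSubmodule :=
    inferInstanceAs (DiscreteTopology (Submodule.span ℤ (Set.range b)))
  rw [AddSubgroup.relIndex_map_nsmul]
  have := ZLattice.rank ℝ (Submodule.span ℤ (Set.range b))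
  rw [finrank_euclideanSpace_fin] at this
  exact congrArg (n ^ ·) this

theorem coinIndex_eq_relIndex_CSL (Γ : AddSubgroup (Euc d)) (R : Euc d ≃ₗᵢ[ℝ] Euc d) :
    coinIndex Γ R = (CSL Γ R).relIndex Γ := by
  rw [coinIndex, CSL, inf_comm, AddSubgroup.inf_relIndex_right]

theorem IsLattice.relIndex_CSL_rotMap {Γ : AddSubgroup (Euc d)} (hΓ : IsLattice Γ)
    (R : Euc d ≃ₗᵢ[ℝ] Euc d) (hfin : coinIndex Γ R ≠ 0) :
    (CSL Γ R).relIndex (rotMap R Γ) = coinIndex Γ R := by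
  obtain ⟨b, rfl⟩ := hΓ
  rw [coinIndex_eq_relIndex_CSL, CSL, rotMap_span] at hfin ⊢
  refine ZLattice.relIndex_inf_eq_of_covolume_eq _ _ ?_ hfin
  rw [b.span_int_range_map, ZLattice.covolume_map_linearIsometryEquiv]

end Lattice

section Scal

variable {d : ℕ} {Γ : AddSubgroup (Euc d)} {R : Euc d ≃ₗᵢ[ℝ] Euc d}

theorem mem_rotMap_iff {y : Euc d} : y ∈ rotMap R Γ ↔ R⁻¹ y ∈ Γ := by
  constructor
  · rintro ⟨x, hx, rfl⟩
    simpa using hx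
  · intro hy
    exact ⟨R⁻¹ y, hy, by simp⟩

theorem mem_Scal_iff {α : ℝ} : α ∈ Scal Γ R ↔ ∀ y ∈ rotMap R Γ, α • y ∈ Γ := by
  simp [Scal, simMap, rotMap, SetLike.le_def]

theorem natCast_mem_Scal_iff {n : ℕ} :
    (n : ℝ) ∈ Scal Γ R ↔ (rotMap R Γ).map (nsmulAddMonoidHom n) ≤ Γ := by
  simp [mem_Scal_iff, AddSubgroup.map_nsmul_le_iff, Nat.cast_smul_eq_nsmul]

theorem natCast_mem_Scal_inv_iff {n : ℕ} :
    (n : ℝ) ∈ Scal Γ R⁻¹ ↔ Γ.map (nsmulAddMonoidHom n) ≤ rotMap R Γ := by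
  simp only [mem_Scal_iff, AddSubgroup.map_nsmul_le_iff, mem_rotMap_iff, inv_inv]
  constructor
  · intro h x hx
    rw [← Nat.cast_smul_eq_nsmul ℝ, map_smul]
    exact h _ (by simpa using hx)
  · intro h y hy
    simpa [Nat.cast_smul_eq_nsmul] using h _ hy

variable (Γ R) in
def scalAddSubgroup : AddSubgroup ℝ where
  carrier := Scal Γ R
  zero_mem' := mem_Scal_iff.2 fun y _ => by simp
  add_mem' {α β} hα hβ := mem_Scal_iff.2 fun y hy => by
    rw [add_smul]; exact add_mem (mem_Scal_iff.1 hα y hy) (mem_Scal_iff.1 hβ y hy)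
  neg_mem' {α} hα := mem_Scal_iff.2 fun y hy => by
    rw [neg_smul]; exact neg_mem (mem_Scal_iff.1 hα y hy)

theorem IsDen.dvd_of_natCast_mem_Scal {k n : ℕ} (hk : IsDen Γ R k) (hn : (n : ℝ) ∈ Scal Γ R) :
    k ∣ n := by
  have hcyc : scalAddSubgroup Γ R = AddSubgroup.closure {(k : ℝ)} :=
    AddSubgroup.cyclic_of_min ⟨⟨hk.2.1, hk.1⟩, fun β hβ => hk.2.2 β hβ.2 hβ.1⟩
  obtain ⟨m, hm⟩ := AddSubgroup.mem_closure_singleton.1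
    (hcyc ▸ hn : (n : ℝ) ∈ AddSubgroup.closure {(k : ℝ)})
  rw [zsmul_eq_mul, mul_comm] at hm
  exact Int.natCast_dvd_natCast.1 ⟨m, by exact_mod_cast hm.symm⟩

end Scal

theorem den_coinIndex_divisibility_general {d : ℕ} (Γ : AddSubgroup (Euc d)) (hΓ : IsLattice Γ)
    (R : Euc d ≃ₗᵢ[ℝ] Euc d)
    (δ δ' : ℝ) (hδ : IsDen Γ R δ) (hδ' : IsDen Γ R⁻¹ δ')
    (k k' : ℕ) (hk : δ = (k : ℝ)) (hk' : δ' = (k' : ℝ)) :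
    Nat.lcm k k' ∣ coinIndex Γ R ∧
    coinIndex Γ R ∣ (Nat.gcd k k') ^ d ∧
    (coinIndex Γ R) ^ 2 ∣ (Nat.lcm k k') ^ d := by
  subst hk hk'
  have hk0 : k ≠ 0 := by exact_mod_cast hδ.1.ne'
  have hk'0 : k' ≠ 0 := by exact_mod_cast hδ'.1.ne'
  have hkΓ : (rotMap R Γ).map (nsmulAddMonoidHom k) ≤ CSL Γ R :=
    le_inf (natCast_mem_Scal_iff.1 hδ.2.1)
      (AddSubgroup.map_nsmul_le_iff.2 fun _ hx => nsmul_mem hx k)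
  have hk'Γ : Γ.map (nsmulAddMonoidHom k') ≤ CSL Γ R :=
    le_inf (AddSubgroup.map_nsmul_le_iff.2 fun _ hx => nsmul_mem hx k')
      (natCast_mem_Scal_inv_iff.1 hδ'.2.1)
  have hdvd' : coinIndex Γ R ∣ k' ^ d := by
    rw [coinIndex_eq_relIndex_CSL, ← hΓ.relIndex_map_nsmul k']
    exact AddSubgroup.relIndex_dvd_of_le_left _ hk'Γ
  have hindex : (CSL Γ R).relIndex (rotMap R Γ) = coinIndex Γ R :=
    hΓ.relIndex_CSL_rotMap R (ne_zero_of_dvd_ne_zero (pow_ne_zero d hk'0) hdvd')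
  refine ⟨Nat.lcm_dvd ?_ ?_, ?_, ?_⟩
  · refine hδ.dvd_of_natCast_mem_Scal (natCast_mem_Scal_iff.2 ?_)
    rw [← hindex]
    exact (AddSubgroup.map_nsmul_relIndex_le _ _).trans inf_le_left
  · refine hδ'.dvd_of_natCast_mem_Scal (natCast_mem_Scal_inv_iff.2 ?_)
    rw [coinIndex_eq_relIndex_CSL]
    exact (AddSubgroup.map_nsmul_relIndex_le _ _).trans inf_le_right
  · rw [← Nat.pow_gcd_pow]
    refine Nat.dvd_gcd ?_ hdvd'
    rw [← hindex, ← (isLattice_rotMap hΓ R).relIndex_map_nsmul k]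
    exact AddSubgroup.relIndex_dvd_of_le_left _ hkΓ
  · have : IsAddTorsionFree (Euc d) := .of_module_rat _
    have hlcm : (Γ ⊔ rotMap R Γ).map (nsmulAddMonoidHom (Nat.lcm k k')) ≤ CSL Γ R := by
      rw [AddSubgroup.map_sup]
      exact sup_le (AddSubgroup.map_nsmul_le_of_dvd (Nat.dvd_lcm_right k k') hk'Γ)
        (AddSubgroup.map_nsmul_le_of_dvd (Nat.dvd_lcm_left k k') hkΓ)
    have := AddSubgroup.relIndex_inf_mul_relIndex_inf_dvd (Nat.lcm_ne_zero hk0 hk'0) hlcm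
    rwa [hΓ.relIndex_map_nsmul, ← CSL, hindex, ← coinIndex_eq_relIndex_CSL, ← sq] at this

theorem den_coinIndex_divisibility {d : ℕ} (Γ : AddSubgroup (Euc d)) (hΓ : IsLattice Γ)
    (R : Euc d ≃ₗᵢ[ℝ] Euc d) (hR : R ∈ OCset Γ)
    (δ δ' : ℝ) (hδ : IsDen Γ R δ) (hδ' : IsDen Γ R⁻¹ δ')
    (k k' : ℕ) (hk : δ = (k : ℝ)) (hk' : δ' = (k' : ℝ)) :
    Nat.lcm k k' ∣ coinIndex Γ R ∧
    coinIndex Γ R ∣ (Nat.gcd k k') ^ d ∧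
    (coinIndex Γ R) ^ 2 ∣ (Nat.lcm k k') ^ d :=
  den_coinIndex_divisibility_general Γ hΓ R δ δ' hδ hδ' k k' hk hk'
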